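/- Let r ≥ 0 be a natural number and b_1,…,b_{r+2} ∈ ℂ. Consider the polynomial V in the variables x_1,…,x_r defined as the determinant of the (2r+2)×(2r+2) matrix whose first r+2 rows are (1, b_i, …, b_i^{2r+1}) for i = 1,…,r+2 and whose last r rows are (1, x_l, x_l², …, x_l^{2r+1}) for l = 1,…,r (a Vandermonde determinant in the 2r+2 nodes b_1,…,b_{r+2}, x_1,…,x_r). Then the determinant of the confluent Vandermonde matrix M(b) equals the mixed partial derivative ∂^r V/∂x_1⋯∂x_r evaluated at x_1 = b_1, …, x_r = b_r. -/

import Mathlib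

open Matrix Finset MvPolynomial

/-- The confluent Vandermonde matrix: a `(2r+2) × (2r+2)` matrix whose first `r+2` rows
are the Vandermonde rows `(1, bᵢ, bᵢ², …, bᵢ^{2r+1})` for `i = 0,…,r+1`, and whose last
`r` rows are the derivative rows `(0, 1, 2bᵢ, …, (2r+1)bᵢ^{2r})` for `i = 0,…,r-1`. -/
def confluentVandermonde (r : ℕ) (b : Fin (r + 2) → ℂ) :
    Matrix (Fin (2 * r + 2)) (Fin (2 * r + 2)) ℂ :=
  Matrix.of fun i j =>
    if h : (i : ℕ) < r + 2 then b ⟨i, h⟩ ^ (j : ℕ)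
    else ((j : ℕ) : ℂ) * b ⟨(i : ℕ) - (r + 2), by have := i.isLt; omega⟩ ^ ((j : ℕ) - 1)

/-- The Vandermonde determinant in the `2r+2` nodes `b₀, …, b_{r+1}, x₀, …, x_{r-1}`,
regarded as a polynomial in the variables `x₀, …, x_{r-1}`. -/
noncomputable def vandermondePoly (r : ℕ) (b : Fin (r + 2) → ℂ) :
    MvPolynomial (Fin r) ℂ :=
  Matrix.det (Matrix.of fun i j : Fin (2 * r + 2) =>
    if h : (i : ℕ) < r + 2 then MvPolynomial.C (b ⟨i, h⟩ ^ (j : ℕ))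
    else (MvPolynomial.X (⟨(i : ℕ) - (r + 2), by have := i.isLt; omega⟩ : Fin r)) ^ (j : ℕ))

/-!
Each variable `x_l` occurs in exactly one row of the matrix defining `vandermondePoly`. Expanding
the determinant along that row, the cofactors do not involve `x_l`, so `∂/∂x_l` acts on the
determinant by differentiating that row alone. Differentiating all `r` variable rows in turn and
then substituting `x_l = b_l` produces exactly the confluent Vandermonde matrix.
-/

namespace Derivation

variable {R A M n : Type*} [CommSemiring R] [CommRing A] [Algebra R A] [Fintype n]
  [DecidableEq n]

theorem map_det_eq_zero [AddCommGroup M] [Module A M] [Module R M] (D : Derivation R A M)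
    {B : Matrix n n A} (hB : ∀ i j, D (B i j) = 0) : D B.det = 0 := by
  rw [det_apply, map_sum]
  refine Finset.sum_eq_zero fun σ _ => ?_
  have hprod : D (∏ i, B (σ i) i) = 0 :=
    Finset.prod_induction _ (fun a => D a = 0)
      (fun a b ha hb => by simp [leibniz, ha, hb]) D.map_one_eq_zero fun i _ => hB _ _
  rw [Units.smul_def, map_zsmul, hprod, smul_zero]

theorem map_det_eq_det_updateRow (D : Derivation R A A) (B : Matrix n n A) (k : n)
    (hB : ∀ i ≠ k, ∀ j, D (B i j) = 0) :
    D B.det = (B.updateRow k fun j => D (B k j)).det := by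
  have hadj : ∀ j, D (adjugate B j k) = 0 := fun j => by
    rw [adjugate_apply]
    refine D.map_det_eq_zero fun i j' => ?_
    rcases eq_or_ne i k with rfl | hi
    · rw [updateRow_self, Pi.single_apply]
      split_ifs <;> simp
    · rw [updateRow_ne hi]
      exact hB i hi j'
  rw [det_eq_sum_mul_adjugate_row B k, det_eq_sum_mul_adjugate_row _ k, map_sum]
  refine Finset.sum_congr rfl fun j _ => ?_
  rw [leibniz, hadj, smul_zero, zero_add, smul_eq_mul, updateRow_self, mul_comm]
  congr 1
  simp only [adjugate_apply, updateRow_idem]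

end Derivation

noncomputable def partialConfluentVandermondeMatrix (r : ℕ) (b : Fin (r + 2) → ℂ)
    (s : Finset (Fin r)) : Matrix (Fin (2 * r + 2)) (Fin (2 * r + 2)) (MvPolynomial (Fin r) ℂ) :=
  Matrix.of fun i j =>
    if h : (i : ℕ) < r + 2 then C (b ⟨i, h⟩ ^ (j : ℕ))
    else
      let l : Fin r := ⟨(i : ℕ) - (r + 2), by have := i.isLt; omega⟩
      if l ∈ s then pderiv l (X l ^ (j : ℕ)) else X l ^ (j : ℕ)

variable {r : ℕ} (b : Fin (r + 2) → ℂ)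

theorem det_partialConfluentVandermondeMatrix_empty :
    (partialConfluentVandermondeMatrix r b ∅).det = vandermondePoly r b := by
  simp [vandermondePoly, partialConfluentVandermondeMatrix]

theorem pderiv_det_partialConfluentVandermondeMatrix {s : Finset (Fin r)} {l : Fin r}
    (hl : l ∉ s) :
    pderiv l (partialConfluentVandermondeMatrix r b s).det =
      (partialConfluentVandermondeMatrix r b (insert l s)).det := by
  set k : Fin (2 * r + 2) := ⟨r + 2 + l, by omega⟩
  have hvar : ∀ i ≠ k, ∀ h : ¬ (i : ℕ) < r + 2,
      (⟨(i : ℕ) - (r + 2), by omega⟩ : Fin r) ≠ l :=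
    fun i hi h hil => hi (Fin.ext (by simp only [k, ← hil]; omega))
  have hrows : ∀ i ≠ k, ∀ j, pderiv l (partialConfluentVandermondeMatrix r b s i j) = 0 := by
    intro i hi j
    by_cases h : (i : ℕ) < r + 2
    · simp [partialConfluentVandermondeMatrix, h]
    · simp only [partialConfluentVandermondeMatrix, of_apply, dif_neg h]
      split_ifs <;> simp [hvar i hi h]
  rw [(pderiv (R := ℂ) l).map_det_eq_det_updateRow _ k hrows]
  congr 1
  ext i j
  rcases eq_or_ne i k with rfl | hi
  · simp [partialConfluentVandermondeMatrix, k, hl]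
  · rw [updateRow_ne hi]
    by_cases h : (i : ℕ) < r + 2
    · simp [partialConfluentVandermondeMatrix, h]
    · simp [partialConfluentVandermondeMatrix, h, hvar i hi h]

theorem foldr_pderiv_vandermondePoly {L : List (Fin r)} (hL : L.Nodup) :
    L.foldr (fun l q => pderiv l q) (vandermondePoly r b) =
      (partialConfluentVandermondeMatrix r b L.toFinset).det := by
  induction L with
  | nil => exact (det_partialConfluentVandermondeMatrix_empty b).symm
  | cons l L ih =>
    obtain ⟨hl, hL⟩ := List.nodup_cons.mp hL
    rw [List.foldr_cons, ih hL, List.toFinset_cons,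
      pderiv_det_partialConfluentVandermondeMatrix b (List.mem_toFinset.not.mpr hl)]

theorem mapMatrix_eval_partialConfluentVandermondeMatrix_univ :
    (MvPolynomial.eval fun l : Fin r => b (Fin.castLE (Nat.le_add_right r 2) l)).mapMatrix
      (partialConfluentVandermondeMatrix r b univ) = confluentVandermonde r b := by
  ext i j
  by_cases h : (i : ℕ) < r + 2 <;>
    simp [partialConfluentVandermondeMatrix, confluentVandermonde, h]

/-- The determinant of the confluent Vandermonde matrix equals the mixed partial
derivative `∂^r V / ∂x₀ ⋯ ∂x_{r-1}` of the Vandermonde determinant `V` in the nodes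
`b₀, …, b_{r+1}, x₀, …, x_{r-1}`, evaluated at `x₀ = b₀, …, x_{r-1} = b_{r-1}`. -/
theorem confluentVandermonde_det_eq_mixed_partial (r : ℕ) (b : Fin (r + 2) → ℂ) :
    (confluentVandermonde r b).det =
      MvPolynomial.eval (fun l : Fin r => b (Fin.castLE (by omega) l))
        ((Finset.univ : Finset (Fin r)).toList.foldr
          (fun l q => MvPolynomial.pderiv l q) (vandermondePoly r b)) := by
  rw [foldr_pderiv_vandermondePoly b (nodup_toList _), toList_toFinset,
    RingHom.map_det, mapMatrix_eval_partialConfluentVandermondeMatrix_univ]
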